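/- Let f ∈ C(Σ, M) satisfy f(0) ≠ f(∞), where 0 ∈ ℂ ⊂ Σ and ∞ is the point at infinity of Σ. Then the set of translation parameters occurring in the stabilizer of f, namely { c ∈ ℂ : there exists a nonzero a ∈ ℂ with f ∘ g_{a,c} = f }, is a bounded subset of ℂ. (Equivalently: if g_n(z) = a_n(z − c_n) is a sequence of affine transformations stabilizing f, then the sequence |c_n| is bounded.) -/
import Mathlib

open OnePoint

/-- The reparametrization `g_{a,c} : Σ → Σ` of the Riemann sphere `Σ = OnePoint ℂ`
extending `z ↦ a · (z − c)` on `ℂ` and fixing the point at infinity. -/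
noncomputable def gAff (a c : ℂ) (ha : a ≠ 0) : C(OnePoint ℂ, OnePoint ℂ) where
  toFun := OnePoint.map (fun z => a * (z - c))
  continuous_toFun :=
    (Homeomorph.onePointCongr ((Homeomorph.subRight c).trans (Homeomorph.mulLeft₀ a ha))).continuous

/-- If `f : Σ → M` is continuous and `f(0) ≠ f(∞)`, then the translation parameters occurring
in the affine stabilizer of `f` form a bounded subset of `ℂ`. -/
theorem stabilizer_translations_bounded {M : Type*} [MetricSpace M] [CompactSpace M]
    (f : C(OnePoint ℂ, M)) (hf : f (((0 : ℂ) : OnePoint ℂ)) ≠ f ∞) :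
    Bornology.IsBounded {c : ℂ | ∃ (a : ℂ) (ha : a ≠ 0), f.comp (gAff a c ha) = f} := by
  have key : ∀ c ∈ {c : ℂ | ∃ (a : ℂ) (ha : a ≠ 0), f.comp (gAff a c ha) = f},
      f ((c : OnePoint ℂ)) = f (((0 : ℂ) : OnePoint ℂ)) := by
    rintro c ⟨a, ha, hfa⟩
    have := ContinuousMap.congr_fun hfa ((c : OnePoint ℂ))
    simp only [ContinuousMap.comp_apply] at this
    rw [← this]
    congr 1
    show OnePoint.map (fun z => a * (z - c)) (c : OnePoint ℂ) = ((0 : ℂ) : OnePoint ℂ)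
    simp
  -- continuity at ∞
  have htend : Filter.Tendsto (fun z : ℂ => f (z : OnePoint ℂ)) (Filter.cocompact ℂ)
      (nhds (f ∞)) := by
    have h1 : Filter.Tendsto ((↑) : ℂ → OnePoint ℂ) (Filter.cocompact ℂ) (nhds ∞) :=
      OnePoint.tendsto_coe_infty.mono_left Filter.cocompact_le_coclosedCompact
    exact (f.continuous.tendsto ∞).comp h1
  set U : Set M := {m | dist m (f ∞) < dist (f (((0 : ℂ) : OnePoint ℂ))) (f ∞)}
  have hU : U ∈ nhds (f ∞) :=
    Metric.ball_mem_nhds _ (dist_pos.mpr hf)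
  have hev : {z : ℂ | f (z : OnePoint ℂ) ∈ U} ∈ Filter.cocompact ℂ := htend.eventually hU
  rw [← Metric.cobounded_eq_cocompact] at hev
  have hb : Bornology.IsBounded {z : ℂ | f (z : OnePoint ℂ) ∉ U} := by
    rw [Bornology.isBounded_def]
    simpa [Set.compl_setOf] using hev
  refine hb.subset fun c hc => ?_
  have h0 : f (((0 : ℂ) : OnePoint ℂ)) ∉ U := by
    simp [U]
  simpa [key c hc] using h0
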